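/- Let X be a circle-module over k. Then the Z/p-Gysin comparison map φ̃_p : X[t̃,θ̃] → X[t̃]⟨1,θ̃⟩ is a chain map, i.e., it commutes with the differentials of the two complexes. (This is the homotopy-orbit comparison map of Proposition 5.3 of the paper, realized on explicit complexes.) -/

import Mathlib

/-!
Common setup: circle-modules over a field `k` of characteristic `p`, and the explicit
homotopy-fixed-point complexes `X[[t]]`, `X[[t,θ]]`, `X[[t]]⟨1,θ⟩` together with the
`ℤ/p`-Gysin comparison map `φ_p`.
-/

variable {k : Type} [Field k] {p : ℕ}

/-- The sign `(-1)^n` as an element of `k`. -/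
def sgn (k : Type) [Field k] (n : ℤ) : k := if Even n then 1 else -1

/-- Cast along an equality of degrees. -/
def gcast (X : ℤ → ModuleCat k) {m n : ℤ} (h : m = n) : X m →ₗ[k] X n := by
  subst h; exact LinearMap.id

/-- A circle-module over `k`: a `ℤ`-graded cochain complex of `k`-vector spaces with a
degree-`0` chain automorphism `τ` satisfying `τ^p = 1`, and a degree-`(-1)` operator `σ`
satisfying `σ∘σ = 0`, `σ∘τ = τ∘σ` and `d∘σ + σ∘d = τ - 1`; i.e. a dg-module over the
dg-algebra `k[τ,σ]/(τ^p = 1, σ² = 0, τσ = στ)` with `dσ = τ - 1`. -/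
structure CircleModule (k : Type) [Field k] (p : ℕ) where
  X : ℤ → ModuleCat k
  d : ∀ n : ℤ, X n →ₗ[k] X (n + 1)
  tau : ∀ n : ℤ, X n →ₗ[k] X n
  sigma : ∀ n : ℤ, X n →ₗ[k] X (n - 1)
  d_comp_d : ∀ n : ℤ, (d (n + 1)).comp (d n) = 0
  d_comm_tau : ∀ n : ℤ, (d n).comp (tau n) = (tau (n + 1)).comp (d n)
  tau_pow_eq_one : ∀ n : ℤ, (tau n : Module.End k (X n)) ^ p = 1
  sigma_comp_sigma : ∀ n : ℤ, (sigma (n - 1)).comp (sigma n) = 0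
  sigma_comm_tau : ∀ n : ℤ, (sigma n).comp (tau n) = (tau (n - 1)).comp (sigma n)
  d_sigma_homotopy : ∀ n : ℤ,
    (gcast X (show n - 1 + 1 = n by omega)).comp ((d (n - 1)).comp (sigma n))
      + (gcast X (show n + 1 - 1 = n by omega)).comp ((sigma (n + 1)).comp (d n))
      = tau n - LinearMap.id

/-- The norm operator `N = 1 + τ + τ² + ⋯ + τ^{p-1}`. -/
def Nop (M : CircleModule k p) (n : ℤ) : M.X n →ₗ[k] M.X n :=
  (∑ i ∈ Finset.range p, (M.tau n : Module.End k (M.X n)) ^ i : Module.End k (M.X n))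

/-- The operator `(τ - 1)^m`. -/
def tauSubOnePow (M : CircleModule k p) (n : ℤ) (m : ℕ) : M.X n →ₗ[k] M.X n :=
  ((M.tau n - 1 : Module.End k (M.X n)) ^ m : Module.End k (M.X n))


/-- Degree-`n` part of the `S¹`-homotopy-orbit model `X[t̃]`:
`⊕_{j ≥ 0} X^{n+2j}` (the coefficient of `t̃^j` lies in `X^{n+2j}`, `|t̃| = -2`). -/
abbrev OrbT (M : CircleModule k p) (n : ℤ) : Type :=
  Π₀ j : ℕ, M.X (n + 2 * (j : ℤ))

/-- Degree-`n` part of the `ℤ/p`-homotopy-orbit model `X[t̃,θ̃]`: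
`(⊕_{j ≥ 0} X^{n+2j}) × (⊕_{j ≥ 0} X^{n+1+2j})` (coefficients of `t̃^j` and of `t̃^j θ̃`,
where `|t̃| = -2` and `|θ̃| = -1`). -/
abbrev OrbTheta (M : CircleModule k p) (n : ℤ) : Type :=
  OrbT M n × OrbT M (n + 1)

/-- Degree-`n` part of `X[t̃]⟨1,θ̃⟩ = X[t̃] ⊕ X[t̃]·θ̃`. -/
abbrev OrbShift (M : CircleModule k p) (n : ℤ) : Type :=
  OrbT M n × OrbT M (n + 1)

/-- The differential of `X[t̃]`: `x·t̃^j ↦ (dx)·t̃^j + N(σ(x))·t̃^{j-1}` for `j > 0`,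
and `x ↦ dx` for `j = 0`. -/
def orbTDiff (M : CircleModule k p) (n : ℤ) : OrbT M n →ₗ[k] OrbT M (n + 1) :=
  DFinsupp.lsum ℕ fun j =>
    (DFinsupp.lsingle j).comp
      ((gcast M.X (show n + 2 * (j : ℤ) + 1 = n + 1 + 2 * (j : ℤ) by omega)).comp
        (M.d (n + 2 * (j : ℤ))))
    + if h : j = 0 then 0 else
        (DFinsupp.lsingle (j - 1)).comp
          ((gcast M.X
              (show n + 2 * (j : ℤ) - 1 = n + 1 + 2 * ((j - 1 : ℕ) : ℤ) by omega)).comp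
            ((Nop M (n + 2 * (j : ℤ) - 1)).comp (M.sigma (n + 2 * (j : ℤ)))))

/-- The differential of `X[t̃,θ̃]`: on homogeneous `x ∈ X`,
`x·t̃^j ↦ (dx)·t̃^j + (-1)^{|x|} N(x)·t̃^{j-1}θ̃` (for `j > 0`; `x ↦ dx` for `j = 0`) and
`x·t̃^j θ̃ ↦ (dx)·t̃^j θ̃ + (-1)^{|x|}(τ - 1)(x)·t̃^j`. -/
def orbThetaDiff (M : CircleModule k p) (n : ℤ) : OrbTheta M n →ₗ[k] OrbTheta M (n + 1) :=
  LinearMap.coprod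
    (DFinsupp.lsum ℕ fun j =>
      LinearMap.prod
        ((DFinsupp.lsingle j).comp
          ((gcast M.X (show n + 2 * (j : ℤ) + 1 = n + 1 + 2 * (j : ℤ) by omega)).comp
            (M.d (n + 2 * (j : ℤ)))))
        (if h : j = 0 then 0 else
          sgn k n •
            (DFinsupp.lsingle (j - 1)).comp
              ((gcast M.X
                  (show n + 2 * (j : ℤ) = n + 1 + 1 + 2 * ((j - 1 : ℕ) : ℤ) by omega)).comp
                (Nop M (n + 2 * (j : ℤ))))))
    (DFinsupp.lsum ℕ fun j =>
      LinearMap.prod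
        (sgn k (n + 1) •
          (DFinsupp.lsingle j).comp (M.tau (n + 1 + 2 * (j : ℤ)) - LinearMap.id))
        ((DFinsupp.lsingle j).comp
          ((gcast M.X
              (show n + 1 + 2 * (j : ℤ) + 1 = n + 1 + 1 + 2 * (j : ℤ) by omega)).comp
            (M.d (n + 1 + 2 * (j : ℤ))))))

/-- The differential of `X[t̃]⟨1,θ̃⟩`, acting as the differential of `X[t̃]` on each of the two
summands (transported along the degree shift on the `θ̃`-summand). -/
def orbShiftDiff (M : CircleModule k p) (n : ℤ) : OrbShift M n →ₗ[k] OrbShift M (n + 1) :=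
  LinearMap.prodMap (orbTDiff M n) (orbTDiff M (n + 1))

/-- The `ℤ/p`-Gysin comparison map `φ̃_p : X[t̃,θ̃] → X[t̃]⟨1,θ̃⟩`: on homogeneous `x ∈ X`,
`x·t̃^j ↦ x·t̃^j + (-1)^{|x|}(τ - 1)^{p-2}(σ(x))·t̃^{j-1}θ̃` (for `j > 0`; `x ↦ x` for `j = 0`)
and `x·t̃^j θ̃ ↦ x·t̃^j θ̃ + (-1)^{|x|} σ(x)·t̃^j`. -/
def gysinOrb (M : CircleModule k p) (n : ℤ) : OrbTheta M n →ₗ[k] OrbShift M n :=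
  LinearMap.coprod
    (DFinsupp.lsum ℕ fun j =>
      LinearMap.prod
        (DFinsupp.lsingle (M := fun i : ℕ => M.X (n + 2 * (i : ℤ))) j)
        (if h : j = 0 then 0 else
          sgn k n •
            (DFinsupp.lsingle (j - 1)).comp
              ((gcast M.X
                  (show n + 2 * (j : ℤ) - 1 = n + 1 + 2 * ((j - 1 : ℕ) : ℤ) by omega)).comp
                ((tauSubOnePow M (n + 2 * (j : ℤ) - 1) (p - 2)).comp
                  (M.sigma (n + 2 * (j : ℤ)))))))
    (DFinsupp.lsum ℕ fun j =>
      LinearMap.prod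
        (sgn k (n + 1) •
          (DFinsupp.lsingle j).comp
            ((gcast M.X (show n + 1 + 2 * (j : ℤ) - 1 = n + 2 * (j : ℤ) by omega)).comp
              (M.sigma (n + 1 + 2 * (j : ℤ)))))
        (DFinsupp.lsingle (M := fun i : ℕ => M.X (n + 1 + 2 * (i : ℤ))) j))

/-- Cast along an equality of degrees for `X[t̃]`. -/
def ocast (M : CircleModule k p) {m n : ℤ} (h : m = n) : OrbT M m →ₗ[k] OrbT M n := by
  subst h; exact LinearMap.id

/-- Cast along an equality of degrees for `X[t̃,θ̃]`. -/
def orbThetaCast (M : CircleModule k p) {m n : ℤ} (h : m = n) :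
    OrbTheta M m →ₗ[k] OrbTheta M n := by
  subst h; exact LinearMap.id

/-- Cast along an equality of degrees for `X[t̃]⟨1,θ̃⟩`. -/
def orbShiftCast (M : CircleModule k p) {m n : ℤ} (h : m = n) :
    OrbShift M m →ₗ[k] OrbShift M n := by
  subst h; exact LinearMap.id

/-!
In characteristic `p` the norm is `N = (τ - 1)^{p-1}` (the `p`-th cyclotomic polynomial is
`(X - 1)^{p-1}` mod `p`). Writing `P = (τ - 1)^{p-2}`, the homotopy `dσ + σd = τ - 1` then gives
`d(Pσ) + (Pσ)d = N`, i.e. `Pσ` is a null-homotopy of `N`; this cancels the `N`-term of the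
differential of `X[t̃,θ̃]` against the `Pσ`-correction of `φ̃_p`. The remaining terms match because
`Nσ = Pσ(τ - 1)`, `Nσ = σN` and `σ(Pσ) = 0`.
-/

@[simp] theorem gcast_gcast {X : ℤ → ModuleCat k} {a b c : ℤ} (h : a = b) (h' : b = c)
    (x : X a) : gcast X h' (gcast X h x) = gcast X (h.trans h') x := by
  subst h h'; rfl

namespace CircleModule

variable (M : CircleModule k p)

@[simp] theorem d_gcast {a b : ℤ} (h : a = b) (x : M.X a) :
    M.d b (gcast M.X h x) = gcast M.X (by rw [h]) (M.d a x) := by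
  subst h; rfl

@[simp] theorem sigma_gcast {a b : ℤ} (h : a = b) (x : M.X a) :
    M.sigma b (gcast M.X h x) = gcast M.X (by rw [h]) (M.sigma a x) := by
  subst h; rfl

theorem tauSubOnePow_gcast {a b : ℤ} (h : a = b) (i : ℕ) (x : M.X a) :
    tauSubOnePow M b i (gcast M.X h x) = gcast M.X h (tauSubOnePow M a i x) := by
  subst h; rfl

theorem d_sigma_add_sigma_d_apply (a : ℤ) (x : M.X a) :
    gcast M.X (by omega) (M.d (a - 1) (M.sigma a x))
      + gcast M.X (by omega) (M.sigma (a + 1) (M.d a x)) = M.tau a x - x := by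
  simpa using LinearMap.congr_fun (M.d_sigma_homotopy a) x

theorem sigma_sigma_apply (a : ℤ) (x : M.X a) : M.sigma (a - 1) (M.sigma a x) = 0 :=
  LinearMap.congr_fun (M.sigma_comp_sigma a) x

theorem tauSubOne_comp_d (a : ℤ) :
    (M.tau (a + 1) - 1 : Module.End k (M.X (a + 1))).comp (M.d a)
      = (M.d a).comp (M.tau a - 1) := by
  rw [LinearMap.sub_comp, LinearMap.comp_sub, M.d_comm_tau]
  rfl

theorem tauSubOne_comp_sigma (a : ℤ) :
    (M.tau (a - 1) - 1 : Module.End k (M.X (a - 1))).comp (M.sigma a)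
      = (M.sigma a).comp (M.tau a - 1) := by
  rw [LinearMap.sub_comp, LinearMap.comp_sub, M.sigma_comm_tau]
  rfl

theorem d_tauSubOnePow_apply (a : ℤ) (i : ℕ) (x : M.X a) :
    M.d a (tauSubOnePow M a i x) = tauSubOnePow M (a + 1) i (M.d a x) :=
  (LinearMap.congr_fun (Module.End.commute_pow_left_of_commute (M.tauSubOne_comp_d a) i) x).symm

theorem sigma_tauSubOnePow_apply (a : ℤ) (i : ℕ) (x : M.X a) :
    M.sigma a (tauSubOnePow M a i x) = tauSubOnePow M (a - 1) i (M.sigma a x) :=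
  (LinearMap.congr_fun
    (Module.End.commute_pow_left_of_commute (M.tauSubOne_comp_sigma a) i) x).symm

theorem sigma_tauSubOnePow_sigma_apply (a : ℤ) (i : ℕ) (x : M.X a) :
    M.sigma (a - 1) (tauSubOnePow M (a - 1) i (M.sigma a x)) = 0 := by
  rw [sigma_tauSubOnePow_apply, sigma_sigma_apply, map_zero]

theorem Nop_eq_tauSubOnePow (hp : p.Prime) [CharP k p] (a : ℤ) :
    Nop M a = tauSubOnePow M a (p - 1) := by
  have := Fact.mk hp
  have h := Polynomial.cyclotomic_mul_prime_eq_pow_of_not_dvd k (n := 1) hp.not_dvd_one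
  rw [one_mul, Polynomial.cyclotomic_prime, Polynomial.cyclotomic_one] at h
  simpa only [Nop, tauSubOnePow, map_sum, map_pow, map_sub, map_one, Polynomial.aeval_X] using
    congrArg (Polynomial.aeval (M.tau a : Module.End k (M.X a))) h

theorem sigma_Nop_apply (hp : p.Prime) [CharP k p] (a : ℤ) (x : M.X a) :
    M.sigma a (Nop M a x) = Nop M (a - 1) (M.sigma a x) := by
  rw [M.Nop_eq_tauSubOnePow hp, M.Nop_eq_tauSubOnePow hp, sigma_tauSubOnePow_apply]

theorem Nop_sigma_apply (hp : p.Prime) [CharP k p] (a : ℤ) (x : M.X a) :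
    Nop M (a - 1) (M.sigma a x)
      = tauSubOnePow M (a - 1) (p - 2) (M.sigma a (M.tau a x - x)) := by
  rw [M.Nop_eq_tauSubOnePow hp, show p - 1 = p - 2 + 1 by have := hp.two_le; omega,
    tauSubOnePow, pow_succ, Module.End.mul_apply, map_sub,
    ← LinearMap.comp_apply (M.sigma a) (M.tau a), M.sigma_comm_tau]
  rfl

/-- The target degree `b` is arbitrary so that the identity applies to whichever casts the
differentials of the complexes produce. -/
theorem d_tauSubOnePow_sigma_add_tauSubOnePow_sigma_d (hp : p.Prime) [CharP k p] {a b : ℤ}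
    (h₁ : a - 1 + 1 = b) (h₂ : a + 1 - 1 = b) (h₃ : a = b) (x : M.X a) :
    gcast M.X h₁ (M.d (a - 1) (tauSubOnePow M (a - 1) (p - 2) (M.sigma a x)))
      + gcast M.X h₂ (tauSubOnePow M (a + 1 - 1) (p - 2) (M.sigma (a + 1) (M.d a x)))
      = gcast M.X h₃ (Nop M a x) := by
  subst h₃
  rw [d_tauSubOnePow_apply, ← tauSubOnePow_gcast, ← tauSubOnePow_gcast, ← map_add,
    d_sigma_add_sigma_d_apply, M.Nop_eq_tauSubOnePow hp,
    show p - 1 = p - 2 + 1 by have := hp.two_le; omega, tauSubOnePow, tauSubOnePow, pow_succ]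
  rfl

end CircleModule

theorem sgn_add_one (n : ℤ) : sgn k (n + 1) = -sgn k n := by
  simp only [sgn, Int.even_add_one, ite_not]
  split_ifs <;> simp

theorem sgn_mul_self (n : ℤ) : sgn k n * sgn k n = 1 := by
  unfold sgn; split_ifs <;> simp

section Components

open CircleModule

variable (M : CircleModule k p) (n : ℤ) (j : ℕ)

@[simp] theorem orbTDiff_single_zero (x : M.X (n + 2 * ((0 : ℕ) : ℤ))) :
    orbTDiff M n (DFinsupp.single 0 x) = DFinsupp.single 0 (gcast M.X (by omega) (M.d _ x)) := by
  simp [orbTDiff]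

@[simp] theorem orbTDiff_single_succ (x : M.X (n + 2 * ((j + 1 : ℕ) : ℤ))) :
    orbTDiff M n (DFinsupp.single (j + 1) x)
      = DFinsupp.single (j + 1) (gcast M.X (by omega) (M.d _ x))
        + DFinsupp.single j (gcast M.X (by omega) (Nop M _ (M.sigma _ x))) := by
  simp [orbTDiff]

theorem orbTDiff_single_of_sigma_eq_zero (x : M.X (n + 2 * (j : ℤ))) (hx : M.sigma _ x = 0) :
    orbTDiff M n (DFinsupp.single j x) = DFinsupp.single j (gcast M.X (by omega) (M.d _ x)) := by
  rcases j with _ | j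
  · exact orbTDiff_single_zero M n x
  · rw [orbTDiff_single_succ, hx, map_zero, map_zero, DFinsupp.single_zero, add_zero]

@[simp] theorem orbThetaDiff_single_zero_left (x : M.X (n + 2 * ((0 : ℕ) : ℤ))) :
    orbThetaDiff M n (DFinsupp.single 0 x, 0)
      = (DFinsupp.single 0 (gcast M.X (by omega) (M.d _ x)), 0) := by
  simp [orbThetaDiff]

@[simp] theorem orbThetaDiff_single_succ_left (x : M.X (n + 2 * ((j + 1 : ℕ) : ℤ))) :
    orbThetaDiff M n (DFinsupp.single (j + 1) x, 0) =
      (DFinsupp.single (j + 1) (gcast M.X (by omega) (M.d _ x)),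
        DFinsupp.single j (sgn k n • gcast M.X (by omega) (Nop M _ x))) := by
  simp [orbThetaDiff]

@[simp] theorem orbThetaDiff_single_right (y : M.X (n + 1 + 2 * (j : ℤ))) :
    orbThetaDiff M n (0, DFinsupp.single j y) =
      (DFinsupp.single j (sgn k (n + 1) • (M.tau _ y - y)),
        DFinsupp.single j (gcast M.X (by omega) (M.d _ y))) := by
  simp [orbThetaDiff]

theorem gysinOrb_mk (u : OrbT M n) (v : OrbT M (n + 1)) :
    gysinOrb M n (u, v) = gysinOrb M n (u, 0) + gysinOrb M n (0, v) := by
  rw [← map_add, Prod.mk_add_mk, add_zero, zero_add]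

theorem gysinOrb_single_left_fst (x : M.X (n + 2 * (j : ℤ))) :
    (gysinOrb M n (DFinsupp.single j x, 0)).1 = DFinsupp.single j x := by
  simp [gysinOrb]

@[simp] theorem gysinOrb_single_zero_left (x : M.X (n + 2 * ((0 : ℕ) : ℤ))) :
    gysinOrb M n (DFinsupp.single 0 x, 0) = (DFinsupp.single 0 x, 0) := by
  simp [gysinOrb]

@[simp] theorem gysinOrb_single_succ_left (x : M.X (n + 2 * ((j + 1 : ℕ) : ℤ))) :
    gysinOrb M n (DFinsupp.single (j + 1) x, 0) =
      (DFinsupp.single (j + 1) x,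
        DFinsupp.single j
          (sgn k n • gcast M.X (by omega) (tauSubOnePow M _ (p - 2) (M.sigma _ x)))) := by
  simp [gysinOrb]

@[simp] theorem gysinOrb_single_right (y : M.X (n + 1 + 2 * (j : ℤ))) :
    gysinOrb M n (0, DFinsupp.single j y) =
      (DFinsupp.single j (sgn k (n + 1) • gcast M.X (by omega) (M.sigma _ y)),
        DFinsupp.single j y) := by
  simp [gysinOrb]

theorem orbShiftDiff_gysinOrb_single_zero_left (x : M.X (n + 2 * ((0 : ℕ) : ℤ))) :
    orbShiftDiff M n (gysinOrb M n (DFinsupp.single 0 x, 0))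
      = gysinOrb M (n + 1) (orbThetaDiff M n (DFinsupp.single 0 x, 0)) := by
  simp [orbShiftDiff]

theorem orbShiftDiff_gysinOrb_single_succ_left (hp : p.Prime) [CharP k p]
    (x : M.X (n + 2 * ((j + 1 : ℕ) : ℤ))) :
    orbShiftDiff M n (gysinOrb M n (DFinsupp.single (j + 1) x, 0))
      = gysinOrb M (n + 1) (orbThetaDiff M n (DFinsupp.single (j + 1) x, 0)) := by
  rw [gysinOrb_single_succ_left, orbThetaDiff_single_succ_left, gysinOrb_mk]
  simp only [orbShiftDiff, LinearMap.prodMap_apply, orbTDiff_single_succ,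
    gysinOrb_single_succ_left, gysinOrb_single_right]
  rw [orbTDiff_single_of_sigma_eq_zero _ _ _ _ (by
      rw [map_smul, sigma_gcast, sigma_tauSubOnePow_sigma_apply, map_zero, smul_zero]),
    Prod.mk_add_mk, Prod.mk.injEq, ← DFinsupp.single_add]
  refine ⟨congrArg (_ + ·) (congrArg (DFinsupp.single j) ?_), congrArg (DFinsupp.single j) ?_⟩
  all_goals simp only [map_smul, d_gcast, sigma_gcast, tauSubOnePow_gcast, gcast_gcast,
    sgn_add_one, neg_neg, smul_smul, sgn_mul_self, one_smul]
  · rw [M.sigma_Nop_apply hp]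
  · rw [← M.d_tauSubOnePow_sigma_add_tauSubOnePow_sigma_d hp (by omega) (by omega)]
    module

theorem orbShiftDiff_gysinOrb_single_right (hp : p.Prime) [CharP k p]
    (y : M.X (n + 1 + 2 * (j : ℤ))) :
    orbShiftDiff M n (gysinOrb M n (0, DFinsupp.single j y))
      = gysinOrb M (n + 1) (orbThetaDiff M n (0, DFinsupp.single j y)) := by
  rw [gysinOrb_single_right, orbThetaDiff_single_right, gysinOrb_mk, gysinOrb_single_right]
  simp only [orbShiftDiff, LinearMap.prodMap_apply]
  rw [orbTDiff_single_of_sigma_eq_zero _ _ _ _ (by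
    rw [map_smul, sigma_gcast, sigma_sigma_apply, map_zero, smul_zero])]
  refine Prod.ext ?_ ?_
  · rw [Prod.fst_add, gysinOrb_single_left_fst, ← DFinsupp.single_add]
    refine congrArg (DFinsupp.single j) ?_
    simp only [map_smul, d_gcast, sigma_gcast, gcast_gcast, sgn_add_one]
    rw [← M.d_sigma_add_sigma_d_apply]
    module
  rcases j with _ | j
  · simp only [gysinOrb_single_zero_left, orbTDiff_single_zero, Prod.snd_add, zero_add]
  · simp only [gysinOrb_single_succ_left, orbTDiff_single_succ, Prod.snd_add]
    rw [add_comm (DFinsupp.single j _)]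
    refine congrArg (_ + ·) (congrArg (DFinsupp.single j) ?_)
    rw [map_smul, map_smul, map_smul, smul_smul, sgn_mul_self, one_smul, M.Nop_sigma_apply hp]

end Components

theorem gysinOrb_chainMap_general (hp : p.Prime) [CharP k p]
    (M : CircleModule k p) (n : ℤ) :
    (orbShiftDiff M n).comp (gysinOrb M n) = (gysinOrb M (n + 1)).comp (orbThetaDiff M n) := by
  refine LinearMap.prod_ext (DFinsupp.lhom_ext' fun j => LinearMap.ext fun x => ?_)
    (DFinsupp.lhom_ext' fun j => LinearMap.ext fun y => ?_)
  · rcases j with _ | j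
    · exact orbShiftDiff_gysinOrb_single_zero_left M n x
    · exact orbShiftDiff_gysinOrb_single_succ_left M n j hp x
  · exact orbShiftDiff_gysinOrb_single_right M n j hp y

/-- For any circle-module `X` over a field `k` of odd prime characteristic `p`,
the `ℤ/p`-Gysin comparison map `φ̃_p : X[t̃,θ̃] → X[t̃]⟨1,θ̃⟩` is a chain map: it commutes with
the differentials of the two complexes. -/
theorem gysinOrb_chainMap (hp : p.Prime) (hodd : Odd p) [CharP k p]
    (M : CircleModule k p) (n : ℤ) :
    (orbShiftDiff M n).comp (gysinOrb M n) = (gysinOrb M (n + 1)).comp (orbThetaDiff M n) :=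
  gysinOrb_chainMap_general hp M n
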